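/- arXiv:0801.0812 — 3 statements merged into one kernel-verified Lean document; each statement's English description precedes it below -/
import Mathlib

section
/- Let G=(V,E) be a connected, locally finite graph. If f ∈ ℓ²(V) satisfies Δf = i·f (pointwise), then f = 0. More precisely: the equation (m(x)−i)f(x) = Σ_{y∼x} f(y) implies √(m(x)²+1)·|f(x)| ≤ Σ_{y∼x}|f(y)|, hence Δ|f| ≤ 0, and since |f| ∈ ℓ²(V) attains its maximum, |f| is constant and therefore zero. -/
open scoped BigOperators

/-- The physical Laplacian of a locally finite graph:
`Δ f x = ∑_{y ∼ x} (f x - f y) = m x * f x - ∑_{y ∼ x} f y`. -/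
noncomputable def graphLap {V : Type*} (G : SimpleGraph V) [G.LocallyFinite]
    (f : V → ℂ) (x : V) : ℂ :=
  ∑ y ∈ G.neighborFinset x, (f x - f y)

/-- If `f ∈ ℓ²(V)` satisfies `Δ f = i·f` pointwise on a connected, locally finite
graph, then `f = 0`. -/
theorem eigenfunction_I_trivial
    {V : Type*} [Countable V] (G : SimpleGraph V) [G.LocallyFinite]
    (hG : G.Connected)
    (f : V → ℂ) (hf : Summable fun x => ‖f x‖ ^ 2)
    (heig : ∀ x, graphLap G f x = Complex.I * f x) :
    f = 0 := by
  by_contra hne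
  obtain ⟨x₀, hx₀⟩ : ∃ x, f x ≠ 0 := by
    by_contra h; push_neg at h; exact hne (funext h)
  set c := ‖f x₀‖ with hc
  have hcpos : 0 < c := norm_pos_iff.mpr hx₀
  -- The set where ‖f‖ ≥ c is finite
  have hfin : {x | c ≤ ‖f x‖}.Finite := by
    have ht := hf.tendsto_cofinite_zero
    have h2 : ∀ᶠ x in Filter.cofinite, ‖f x‖ ^ 2 < c ^ 2 :=
      ht.eventually (gt_mem_nhds (by positivity))
    refine (Filter.eventually_cofinite.mp h2).subset ?_
    intro x hx
    simp only [Set.mem_setOf_eq] at hx ⊢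
    intro hlt
    exact absurd hlt (not_lt.mpr (pow_le_pow_left₀ hcpos.le hx 2))
  have hx₀S : x₀ ∈ hfin.toFinset := by simp [hc]
  obtain ⟨x₁, hx₁S, hx₁max⟩ :=
    hfin.toFinset.exists_max_image (fun x => ‖f x‖) ⟨x₀, hx₀S⟩
  set M := ‖f x₁‖ with hM
  have hcM : c ≤ M := by
    have := hfin.mem_toFinset.mp hx₁S; simpa using this
  have hMpos : 0 < M := lt_of_lt_of_le hcpos hcM
  have hglob : ∀ x, ‖f x‖ ≤ M := by
    intro x
    by_cases hx : c ≤ ‖f x‖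
    · exact hx₁max x (hfin.mem_toFinset.mpr hx)
    · exact (not_le.mp hx).le.trans hcM
  -- the eigenvalue equation at x₁
  set d := (G.neighborFinset x₁).card with hd
  have hsum : ∑ y ∈ G.neighborFinset x₁, f y = ((d : ℂ) - Complex.I) * f x₁ := by
    have h := heig x₁
    unfold graphLap at h
    rw [Finset.sum_sub_distrib, Finset.sum_const, nsmul_eq_mul] at h
    rw [← hd] at h
    linear_combination -h
  have hnorm : ‖((d : ℂ) - Complex.I)‖ * M ≤ (d : ℝ) * M := by
    calc ‖((d : ℂ) - Complex.I)‖ * M = ‖∑ y ∈ G.neighborFinset x₁, f y‖ := by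
          rw [hsum, norm_mul]
      _ ≤ ∑ y ∈ G.neighborFinset x₁, ‖f y‖ := norm_sum_le _ _
      _ ≤ ∑ _y ∈ G.neighborFinset x₁, M := Finset.sum_le_sum (fun y _ => hglob y)
      _ = (d : ℝ) * M := by rw [Finset.sum_const, nsmul_eq_mul, hd]
  have hgt : (d : ℝ) < ‖((d : ℂ) - Complex.I)‖ := by
    have hsq : ‖((d : ℂ) - Complex.I)‖ ^ 2 = (d : ℝ) ^ 2 + 1 := by
      rw [Complex.sq_norm, Complex.normSq_apply]
      simp [Complex.sub_re, Complex.sub_im]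
      ring
    refine lt_of_pow_lt_pow_left₀ 2 (norm_nonneg _) ?_
    rw [hsq]; nlinarith
  nlinarith
end

section
/- Let G=(V,E) be a connected, locally finite graph. Then any f ∈ ℓ²(V) with Δf = ±i·f must vanish: ker(Δ_M ± i) = {0}, where Δ_M is Δ restricted to the domain D = {f ∈ ℓ²(V) : Δf ∈ ℓ²(V)}. -/
open scoped BigOperators

/-- `ker (Δ_M ± i) = {0}`: any `f` in the maximal domain
`D = {f ∈ ℓ²(V) : Δ f ∈ ℓ²(V)}` with `Δ f = i f` or `Δ f = -i f` vanishes. -/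
theorem ker_maximal_laplacian_pm_I_trivial
    {V : Type*} [Countable V] (G : SimpleGraph V) [G.LocallyFinite]
    (hG : G.Connected)
    (f : V → ℂ) (hf : Summable fun x => ‖f x‖ ^ 2)
    (hDf : Summable fun x => ‖graphLap G f x‖ ^ 2)
    (heig : (∀ x, graphLap G f x = Complex.I * f x) ∨
            (∀ x, graphLap G f x = -Complex.I * f x)) :
    f = 0 := by
  -- extract the eigenvalue
  obtain ⟨c, hre, him, hc⟩ :
      ∃ c : ℂ, c.re = 0 ∧ c.im ^ 2 = 1 ∧ ∀ x, graphLap G f x = c * f x := by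
    rcases heig with h | h
    · exact ⟨Complex.I, by simp, by simp, h⟩
    · exact ⟨-Complex.I, by simp, by simp, h⟩
  by_contra hne
  have hx1 : ∃ x, f x ≠ 0 := by
    by_contra h; push_neg at h
    exact hne (funext fun x => h x)
  obtain ⟨x₁, hx₁⟩ := hx1
  set u : V → ℝ := fun x => ‖f x‖ with hu
  have hu1 : 0 < u x₁ := norm_pos_iff.mpr hx₁
  -- the superlevel set is finite
  have hev : ∀ᶠ x in Filter.cofinite, ‖f x‖ ^ 2 < u x₁ ^ 2 :=
    hf.tendsto_cofinite_zero.eventually_lt_const (by positivity)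
  have hfin : {x | u x₁ ≤ u x}.Finite := by
    refine (Filter.eventually_cofinite.mp hev).subset ?_
    intro x hx
    simp only [Set.mem_setOf_eq, not_lt]
    exact pow_le_pow_left₀ (norm_nonneg _) hx 2
  -- get a global maximum of u
  have hne' : hfin.toFinset.Nonempty := ⟨x₁, by simp⟩
  obtain ⟨x₀, hx₀mem, hx₀max⟩ := hfin.toFinset.exists_max_image u hne'
  have hglob : ∀ x, u x ≤ u x₀ := by
    intro x
    by_cases hx : u x₁ ≤ u x
    · exact hx₀max x (by simpa using hx)
    · have hx₀' : u x₁ ≤ u x₀ := by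
        simpa using Set.Finite.mem_toFinset hfin |>.mp hx₀mem
      exact le_trans (le_of_not_ge hx) hx₀'
  have hM : 0 < u x₀ := lt_of_lt_of_le hu1 (by
    simpa using Set.Finite.mem_toFinset hfin |>.mp hx₀mem)
  -- the equation at x₀
  set m : ℕ := G.degree x₀ with hm
  have heq : ((m : ℂ) - c) * f x₀ = ∑ y ∈ G.neighborFinset x₀, f y := by
    have h1 := hc x₀
    unfold graphLap at h1
    rw [Finset.sum_sub_distrib, Finset.sum_const, SimpleGraph.card_neighborFinset_eq_degree]
      at h1
    rw [sub_mul]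
    rw [nsmul_eq_mul] at h1
    linear_combination h1
  -- norm estimates
  have hz : (m : ℝ) < ‖(m : ℂ) - c‖ := by
    have h2 : ‖(m : ℂ) - c‖ ^ 2 = (m : ℝ) ^ 2 + 1 := by
      rw [Complex.sq_norm, Complex.normSq_apply]
      simp [Complex.sub_re, Complex.sub_im, hre]
      ring_nf
      rw [him]
      ring
    nlinarith [norm_nonneg ((m : ℂ) - c), Nat.cast_nonneg (α := ℝ) m]
  have hle : ‖(m : ℂ) - c‖ * u x₀ ≤ (m : ℝ) * u x₀ := by
    calc ‖(m : ℂ) - c‖ * u x₀ = ‖((m : ℂ) - c) * f x₀‖ := by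
          rw [norm_mul]
      _ = ‖∑ y ∈ G.neighborFinset x₀, f y‖ := by rw [heq]
      _ ≤ ∑ y ∈ G.neighborFinset x₀, ‖f y‖ := norm_sum_le _ _
      _ ≤ ∑ _y ∈ G.neighborFinset x₀, u x₀ := Finset.sum_le_sum (fun y _ => hglob y)
      _ = (m : ℝ) * u x₀ := by
          rw [Finset.sum_const, SimpleGraph.card_neighborFinset_eq_degree, nsmul_eq_mul]
  nlinarith
end

section
/- Let G=(V,E) be a connected, locally finite graph. The adjoint of the operator Δ_m : C_c(V) → ℓ²(V) (physical Laplacian on finitely supported functions) is the maximal operator Δ_M : D → ℓ²(V), where D = {f ∈ ℓ²(V) : Δf ∈ ℓ²(V)}. -/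
open scoped BigOperators

/-- `f ∈ ℓ²(V)` belongs to the domain of the adjoint of the minimal operator
`Δ_m : C_c(V) → ℓ²(V)` (i.e. there is `h ∈ ℓ²(V)` with `⟨Δ g, f⟩ = ⟨g, h⟩` for all
finitely supported `g`). -/
def InAdjointDomain {V : Type*} (G : SimpleGraph V) [G.LocallyFinite]
    (f h : V → ℂ) : Prop :=
  (Summable fun x => ‖h x‖ ^ 2) ∧
    ∀ g : V → ℂ, (Function.support g).Finite →
      ∑' x, graphLap G g x * (starRingEnd ℂ) (f x)
        = ∑' x, g x * (starRingEnd ℂ) (h x)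

section Aux
variable {V : Type*} (G : SimpleGraph V) [G.LocallyFinite]

open scoped Classical in
noncomputable def dlt (v : V) : V → ℂ := fun x => if x = v then 1 else 0

lemma lap_dlt_support (v x : V) (hx : x ≠ v) (hadj : ¬ G.Adj v x) :
    graphLap G (dlt v) x = 0 := by
  classical
  unfold graphLap dlt
  apply Finset.sum_eq_zero
  intro y hy
  rw [SimpleGraph.mem_neighborFinset] at hy
  have hy' : y ≠ v := by
    rintro rfl
    exact hadj hy.symm
  simp [hx, hy']

lemma key_tsum (f : V → ℂ) (v : V) :
    ∑' x, graphLap G (dlt v) x * (starRingEnd ℂ) (f x)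
      = (starRingEnd ℂ) (graphLap G f v) := by
  classical
  have hv : v ∉ G.neighborFinset v := by simp
  rw [tsum_eq_sum (s := insert v (G.neighborFinset v)) ?_]
  · rw [Finset.sum_insert hv]
    have h1 : graphLap G (dlt v) v = (G.degree v : ℂ) := by
      unfold graphLap dlt
      have h : ∀ y ∈ G.neighborFinset v,
          ((if v = v then (1:ℂ) else 0) - (if y = v then 1 else 0)) = 1 := by
        intro y hy
        rw [SimpleGraph.mem_neighborFinset] at hy
        have : y ≠ v := fun h => by simp [h] at hy
        simp [this]
      rw [Finset.sum_congr rfl h, Finset.sum_const,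
        SimpleGraph.card_neighborFinset_eq_degree, nsmul_eq_mul, mul_one]
    have h2 : ∀ x ∈ G.neighborFinset v, graphLap G (dlt v) x = -1 := by
      intro x hx
      rw [SimpleGraph.mem_neighborFinset] at hx
      have hxv : x ≠ v := fun h => by simp [h] at hx
      unfold graphLap dlt
      have h : ∀ y ∈ G.neighborFinset x,
          ((if x = v then (1:ℂ) else 0) - (if y = v then 1 else 0))
            = if y = v then (-1 : ℂ) else 0 := by
        intro y hy
        simp only [hxv, if_false, zero_sub]
        split <;> simp
      rw [Finset.sum_congr rfl h, Finset.sum_ite_eq' (G.neighborFinset x) v (fun _ => (-1:ℂ))]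
      simp [hx.symm]
    rw [Finset.sum_congr rfl (fun x hx => by rw [h2 x hx]), h1]
    unfold graphLap
    rw [map_sum]
    have h3 : ∀ x ∈ G.neighborFinset v,
        (starRingEnd ℂ) (f v - f x) = (starRingEnd ℂ) (f v) - (starRingEnd ℂ) (f x) := by
      intro x _; exact map_sub _ _ _
    rw [Finset.sum_congr rfl h3, Finset.sum_sub_distrib, Finset.sum_const,
      SimpleGraph.card_neighborFinset_eq_degree, nsmul_eq_mul]
    simp [sub_eq_add_neg, Finset.sum_neg_distrib, neg_mul]
  · intro x hx
    simp only [Finset.mem_insert, SimpleGraph.mem_neighborFinset] at hx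
    push_neg at hx
    rw [lap_dlt_support G v x hx.1 hx.2]
    simp

end Aux

section Aux2
variable {V : Type*} (G : SimpleGraph V) [G.LocallyFinite]

lemma graphLap_finsum {ι : Type*} (s : Finset ι) (F : ι → V → ℂ) (y : V) :
    graphLap G (fun x => ∑ v ∈ s, F v x) y = ∑ v ∈ s, graphLap G (F v) y := by
  unfold graphLap
  rw [Finset.sum_comm]
  exact Finset.sum_congr rfl fun z _ => (Finset.sum_sub_distrib _ _).symm

lemma graphLap_smul (c : ℂ) (g : V → ℂ) (y : V) :
    graphLap G (fun x => c * g x) y = c * graphLap G g y := by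
  unfold graphLap
  rw [Finset.mul_sum]
  exact Finset.sum_congr rfl fun z _ => (mul_sub _ _ _).symm

lemma green (f g : V → ℂ) (hg : (Function.support g).Finite) :
    ∑' x, graphLap G g x * (starRingEnd ℂ) (f x)
      = ∑' x, g x * (starRingEnd ℂ) (graphLap G f x) := by
  classical
  set s := hg.toFinset with hs
  have hmem : ∀ x, x ∉ s → g x = 0 := by
    intro x hx
    by_contra h
    exact hx (by simp [hs, Function.mem_support, h])
  have hrep : ∀ x, g x = ∑ v ∈ s, g v * dlt v x := by
    intro x
    unfold dlt
    simp only [mul_ite, mul_one, mul_zero]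
    rw [Finset.sum_ite_eq s x g]
    split
    · rfl
    · exact hmem x (by assumption)
  have hlap : ∀ x, graphLap G g x = ∑ v ∈ s, g v * graphLap G (dlt v) x := by
    intro x
    calc graphLap G g x = graphLap G (fun y => ∑ v ∈ s, g v * dlt v y) x := by
          congr 1; funext y; exact hrep y
      _ = ∑ v ∈ s, graphLap G (fun y => g v * dlt v y) x :=
          graphLap_finsum G s _ x
      _ = ∑ v ∈ s, g v * graphLap G (dlt v) x :=
          Finset.sum_congr rfl fun v _ => graphLap_smul G _ _ x
  have hsummand : ∀ v : V, Summable fun x => g v * graphLap G (dlt v) x * (starRingEnd ℂ) (f x) := by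
    intro v
    apply summable_of_ne_finset_zero (s := insert v (G.neighborFinset v))
    intro x hx
    simp only [Finset.mem_insert, SimpleGraph.mem_neighborFinset] at hx
    push_neg at hx
    rw [lap_dlt_support G v x hx.1 hx.2]
    ring
  calc ∑' x, graphLap G g x * (starRingEnd ℂ) (f x)
      = ∑' x, ∑ v ∈ s, g v * graphLap G (dlt v) x * (starRingEnd ℂ) (f x) := by
        congr 1; funext x; rw [hlap x, Finset.sum_mul]
    _ = ∑ v ∈ s, ∑' x, g v * graphLap G (dlt v) x * (starRingEnd ℂ) (f x) :=
        Summable.tsum_finsetSum fun v _ => hsummand v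
    _ = ∑ v ∈ s, g v * ∑' x, graphLap G (dlt v) x * (starRingEnd ℂ) (f x) := by
        refine Finset.sum_congr rfl fun v _ => ?_
        rw [← tsum_mul_left]
        congr 1; funext x; ring
    _ = ∑ v ∈ s, g v * (starRingEnd ℂ) (graphLap G f v) :=
        Finset.sum_congr rfl fun v _ => by rw [key_tsum]
    _ = ∑' x, g x * (starRingEnd ℂ) (graphLap G f x) := by
        rw [tsum_eq_sum (s := s)]
        intro x hx
        rw [hmem x hx, zero_mul]

end Aux2

/-- The adjoint of `Δ_m : C_c(V) → ℓ²(V)` is the maximal operator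
`Δ_M : D → ℓ²(V)`, `D = {f ∈ ℓ²(V) : Δ f ∈ ℓ²(V)}`: an `f ∈ ℓ²(V)` lies in the
domain of the adjoint iff `Δ f ∈ ℓ²(V)`, and in that case the adjoint acts as `Δ`. -/
theorem adjoint_of_minimal_laplacian_is_maximal
    {V : Type*} [Countable V] (G : SimpleGraph V) [G.LocallyFinite]
    (hG : G.Connected)
    (f : V → ℂ) (hf : Summable fun x => ‖f x‖ ^ 2) :
    ((∃ h : V → ℂ, InAdjointDomain G f h) ↔ Summable fun x => ‖graphLap G f x‖ ^ 2) ∧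
      ∀ h : V → ℂ, InAdjointDomain G f h → h = graphLap G f := by
  classical
  have uniq : ∀ h : V → ℂ, InAdjointDomain G f h → h = graphLap G f := by
    intro h hd
    funext v
    have hsupp : (Function.support (dlt v)).Finite := by
      apply Set.Finite.subset (Set.finite_singleton v)
      intro x hx
      by_contra hxv
      exact hx (by simp [dlt, show x ≠ v from fun e => hxv (by simp [e])])
    have heq := hd.2 (dlt v) hsupp
    rw [key_tsum G f v] at heq
    have hrhs : ∑' x, dlt v x * (starRingEnd ℂ) (h x) = (starRingEnd ℂ) (h v) := by
      rw [tsum_eq_single v]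
      · simp [dlt]
      · intro x hx
        simp [dlt, hx]
    rw [hrhs] at heq
    have := congrArg (starRingEnd ℂ) heq
    simpa using this.symm
  refine ⟨⟨?_, ?_⟩, uniq⟩
  · rintro ⟨h, hd⟩
    have := hd.1
    rwa [uniq h hd] at this
  · intro hsum
    exact ⟨graphLap G f, hsum, fun g hg => green G f g hg⟩
end
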